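/- Let U : Ω̄ → ℝ be lower semi-continuous on the closure of a bounded convex open set Ω ⊂ ℝⁿ, and let U** denote its convex hull (largest convex function below U). If x ∈ Ω̄ and D^{2,−}U**(x) is nonempty, then there exist points x₁,…,x_q ∈ Ω̄ with q ≤ n+1, and weights λ₁,…,λ_q ∈ (0,1] summing to 1, such that x = Σλᵢxᵢ and U**(x) = Σλᵢ U(xᵢ); moreover U** is affine on the convex hull of {x₁,…,x_q}. -/

import Mathlib

open Filter

/-- Quadratic form of a matrix. -/
def quadForm {n : ℕ} (A : Matrix (Fin n) (Fin n) ℝ) (v : EuclideanSpace ℝ (Fin n)) : ℝ :=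
  ∑ i, ∑ j, A i j * v i * v j

/-- `(p, A)` belongs to the second-order subjet `D^{2,−}u(x)` relative to the set `S`. -/
def MemSubjetWithin {n : ℕ} (S : Set (EuclideanSpace ℝ (Fin n)))
    (u : EuclideanSpace ℝ (Fin n) → ℝ) (x p : EuclideanSpace ℝ (Fin n))
    (A : Matrix (Fin n) (Fin n) ℝ) : Prop :=
  ∀ ε : ℝ, 0 < ε → ∀ᶠ y in nhdsWithin x S,
    u x + (inner ℝ p (y - x) : ℝ) + (1 / 2) * quadForm A (y - x) - ε * ‖y - x‖ ^ 2 ≤ u y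

/-- The convex envelope (biconjugate) of `U` on `S`: the supremum of all affine functions
lying below `U` on `S`. -/
noncomputable def convexEnvelope {n : ℕ} (S : Set (EuclideanSpace ℝ (Fin n)))
    (U : EuclideanSpace ℝ (Fin n) → ℝ) : EuclideanSpace ℝ (Fin n) → ℝ :=
  fun x => sSup {v | ∃ (g : EuclideanSpace ℝ (Fin n) →L[ℝ] ℝ) (b : ℝ),
    (∀ y ∈ S, g y + b ≤ U y) ∧ v = g x + b}

/-!
The first-order part of a subjet of the convex function `U**` is a subgradient, so
`ℓ y = U**(x) + ⟪p, y - x⟫` is an affine minorant of `U` touching `U**` at `x`. Its contact set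
`Z = {U = ℓ}` is compact by lower semicontinuity, hence so is its convex hull. If `x` lay outside
that hull, adding a small multiple of a functional separating `x` from it would give an affine
minorant of `U` strictly above `ℓ` at `x`, contradicting the maximality of `U**`. Carathéodory
writes `x` as a convex combination of at most `n + 1` points of `Z`, and on their hull `U**` is
squeezed between `ℓ` and every affine function lying below `U = ℓ` on `Z`, so it equals `ℓ` there.
-/

open Set Topology

section Caratheodory

variable {E : Type*} [AddCommGroup E] [Module ℝ E]

theorem eq_pos_convex_span_fin_of_mem_convexHull [FiniteDimensional ℝ E] {s : Set E} {x : E}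
    (hx : x ∈ convexHull ℝ s) :
    ∃ q ≤ Module.finrank ℝ E + 1, ∃ (z : Fin q → E) (w : Fin q → ℝ),
      (∀ i, z i ∈ s) ∧ (∀ i, 0 < w i) ∧ ∑ i, w i = 1 ∧ ∑ i, w i • z i = x := by
  obtain ⟨ι, _, z, w, hzs, hind, hw, hsum, hx⟩ := eq_pos_convex_span_of_mem_convexHull hx
  let e := (Fintype.equivFin ι).symm
  refine ⟨Fintype.card ι, ?_, z ∘ e, w ∘ e, fun i => hzs ⟨e i, rfl⟩, fun i => hw (e i), ?_, ?_⟩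
  · exact hind.card_le_finrank_succ.trans
      (Nat.add_le_add_right (Submodule.finrank_le _) 1)
  · rw [← hsum]; exact e.sum_comp w
  · rw [← hx]; exact e.sum_comp fun i => w i • z i

theorem IsCompact.isCompact_convexHull [TopologicalSpace E] [ContinuousAdd E] [ContinuousSMul ℝ E]
    [FiniteDimensional ℝ E] {s : Set E} (hs : IsCompact s) : IsCompact (convexHull ℝ s) := by
  have hhull : convexHull ℝ s = ⋃ q ∈ Finset.range (Module.finrank ℝ E + 2),
      (fun wz : (Fin q → ℝ) × (Fin q → E) => ∑ i, wz.1 i • wz.2 i) ''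
        (stdSimplex ℝ (Fin q) ×ˢ univ.pi fun _ => s) := by
    refine subset_antisymm ?_ ?_
    · intro x hx
      obtain ⟨q, hq, z, w, hzs, hw, hsum, rfl⟩ := eq_pos_convex_span_fin_of_mem_convexHull hx
      exact mem_biUnion (Finset.mem_range.2 (Nat.lt_succ_of_le hq))
        ⟨(w, z), ⟨⟨fun i => (hw i).le, hsum⟩, fun i _ => hzs i⟩, rfl⟩
    · simp only [iUnion_subset_iff, image_subset_iff]
      rintro q - ⟨w, z⟩ ⟨hw, hz⟩
      exact (convex_convexHull ℝ s).sum_mem (fun i _ => hw.1 i) hw.2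
        fun i _ => subset_convexHull ℝ s (hz i (mem_univ i))
  rw [hhull]
  refine Finset.isCompact_biUnion _ fun q _ =>
    ((isCompact_stdSimplex (𝕜 := ℝ) (ι := Fin q)).prod (isCompact_univ_pi fun _ => hs)).image ?_
  fun_prop

end Caratheodory

theorem IsCompact.exists_pos_add_mul_le {X : Type*} [TopologicalSpace X] {K : Set X}
    (hK : IsCompact K) {U φ h : X → ℝ} (hU : LowerSemicontinuousOn U K) (hφ : Continuous φ)
    (hh : Continuous h) (hφU : ∀ z ∈ K, φ z ≤ U z) (hcontact : ∀ z ∈ K, U z ≤ φ z → h z < 0) :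
    ∃ δ > 0, ∀ z ∈ K, φ z + δ * h z ≤ U z := by
  obtain ⟨μ, hμ, hμU⟩ : ∃ μ > 0, ∀ z ∈ K, 0 ≤ h z → μ ≤ U z - φ z := by
    rcases (K ∩ h ⁻¹' Ici 0).eq_empty_or_nonempty with hempty | hne
    · exact ⟨1, one_pos, fun z hz h0 => (hempty.subset ⟨hz, h0⟩).elim⟩
    have hlsc : LowerSemicontinuousOn (fun z => U z + -φ z) (K ∩ h ⁻¹' Ici 0) :=
      (hU.mono inter_subset_left).add (hφ.neg.lowerSemicontinuous.lowerSemicontinuousOn _)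
    obtain ⟨a, ⟨haK, ha0⟩, hmin⟩ :=
      hlsc.exists_isMinOn hne (hK.inter_right (isClosed_Ici.preimage hh))
    refine ⟨U a + -φ a, ?_, fun z hz h0 => (hmin ⟨hz, h0⟩).trans_eq (sub_eq_add_neg _ _).symm⟩
    by_contra hle
    exact (hcontact a haK (by linarith)).not_ge ha0
  -- `μ` is the gap `U - φ` on the compact set `{h ≥ 0}`, which misses the contact set;
  -- dividing by an upper bound of `h` keeps the tilt `δ * h` below that gap.
  obtain ⟨M, hM⟩ := (hK.image hh).bddAbove
  have hM1 : 0 < max M 1 := lt_max_of_lt_right one_pos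
  refine ⟨μ / max M 1, div_pos hμ hM1, fun z hz => ?_⟩
  rcases lt_or_ge (h z) 0 with hneg | hnonneg
  · nlinarith [hφU z hz, div_pos hμ hM1]
  · have hhz : h z ≤ max M 1 := (hM (mem_image_of_mem h hz)).trans (le_max_left M 1)
    have : μ / max M 1 * h z ≤ μ := by
      calc μ / max M 1 * h z ≤ μ / max M 1 * max M 1 := by gcongr
        _ = μ := div_mul_cancel₀ μ hM1.ne'
    linarith [hμU z hz hnonneg]

theorem ConvexOn.add_le_of_eventually_le {E : Type*} [AddCommGroup E] [Module ℝ E] {K : Set E}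
    {f : E → ℝ} (hf : ConvexOn ℝ K f) {x z : E} (hx : x ∈ K) (hz : z ∈ K) {d C : ℝ}
    (h : ∀ᶠ t in 𝓝[>] (0 : ℝ), f x + t * d + t ^ 2 * C ≤ f (x + t • (z - x))) :
    f x + d ≤ f z := by
  have hslope : ∀ᶠ t in 𝓝[>] (0 : ℝ), d + t * C ≤ f z - f x := by
    filter_upwards [h, Ioo_mem_nhdsGT one_pos] with t ht ht01
    have hconv : f (x + t • (z - x)) ≤ (1 - t) * f x + t * f z := by
      have hpt : x + t • (z - x) = (1 - t) • x + t • z := by module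
      simpa only [hpt, smul_eq_mul] using
        hf.2 hx hz (sub_nonneg.2 ht01.2.le) ht01.1.le (sub_add_cancel 1 t)
    have : t * (d + t * C) ≤ t * (f z - f x) := by nlinarith
    exact le_of_mul_le_mul_left this ht01.1
  have hlim : Tendsto (fun t : ℝ => d + t * C) (𝓝[>] 0) (𝓝 d) := by
    have hcont : Continuous fun t : ℝ => d + t * C := by fun_prop
    simpa using (hcont.tendsto 0).mono_left nhdsWithin_le_nhds
  linarith [le_of_tendsto hlim hslope]

section ConvexEnvelope

variable {n : ℕ} {S : Set (EuclideanSpace ℝ (Fin n))} {U : EuclideanSpace ℝ (Fin n) → ℝ}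
  {g : EuclideanSpace ℝ (Fin n) →L[ℝ] ℝ} {b : ℝ} {x y : EuclideanSpace ℝ (Fin n)}

theorem le_convexEnvelope (hg : ∀ z ∈ S, g z + b ≤ U z) (hy : y ∈ S) :
    g y + b ≤ convexEnvelope S U y :=
  le_csSup ⟨U y, by rintro v ⟨g', b', hg', rfl⟩; exact hg' y hy⟩ ⟨g, b, hg, rfl⟩

theorem convexEnvelope_le_of_forall
    (hne : ∃ (g : EuclideanSpace ℝ (Fin n) →L[ℝ] ℝ) (b : ℝ), ∀ z ∈ S, g z + b ≤ U z) {c : ℝ}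
    (h : ∀ (g : EuclideanSpace ℝ (Fin n) →L[ℝ] ℝ) (b : ℝ), (∀ z ∈ S, g z + b ≤ U z) →
      g y + b ≤ c) :
    convexEnvelope S U y ≤ c := by
  obtain ⟨g, b, hg⟩ := hne
  exact csSup_le ⟨_, g, b, hg, rfl⟩ (by rintro v ⟨g', b', hg', rfl⟩; exact h g' b' hg')

theorem exists_affine_minorant_of_bddBelow (hU : BddBelow (U '' S)) :
    ∃ (g : EuclideanSpace ℝ (Fin n) →L[ℝ] ℝ) (b : ℝ), ∀ z ∈ S, g z + b ≤ U z := by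
  obtain ⟨m, hm⟩ := hU
  exact ⟨0, m, fun z hz => by simpa using hm (mem_image_of_mem U hz)⟩

theorem convexEnvelope_le (hU : BddBelow (U '' S)) (hy : y ∈ S) : convexEnvelope S U y ≤ U y :=
  convexEnvelope_le_of_forall (exists_affine_minorant_of_bddBelow hU) fun _ _ hg => hg y hy

theorem convexOn_convexEnvelope (hS : Convex ℝ S) (hU : BddBelow (U '' S)) :
    ConvexOn ℝ S (convexEnvelope S U) := by
  refine ⟨hS, fun x hx y hy a c ha hc hac => ?_⟩
  refine convexEnvelope_le_of_forall (exists_affine_minorant_of_bddBelow hU) fun g b hg => ?_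
  calc g (a • x + c • y) + b = a * (g x + b) + c * (g y + b) := by
        simp only [map_add, map_smul, smul_eq_mul]; linear_combination (-b) * hac
    _ ≤ a • convexEnvelope S U x + c • convexEnvelope S U y := by
        simp only [smul_eq_mul]
        gcongr
        exacts [le_convexEnvelope hg hx, le_convexEnvelope hg hy]

theorem convexEnvelope_eq_of_mem_convexHull_contactSet (hS : Convex ℝ S)
    (hg : ∀ z ∈ S, g z + b ≤ U z) (hy : y ∈ convexHull ℝ {z ∈ S | U z ≤ g z + b}) :
    convexEnvelope S U y = g y + b := by
  refine le_antisymm (convexEnvelope_le_of_forall ⟨g, b, hg⟩ fun g' b' hg' => ?_)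
    (le_convexEnvelope hg (convexHull_min (sep_subset _ _) hS hy))
  have hhalf : Convex ℝ {z | (g' - g) z ≤ b - b'} :=
    convex_halfSpace_le (g' - g).toLinearMap.isLinear _
  have hcontact : {z ∈ S | U z ≤ g z + b} ⊆ {z | (g' - g) z ≤ b - b'} := fun z hz => by
    simp only [mem_ofPred_eq, sub_apply]
    linarith [hg' z hz.1, hz.2]
  have := convexHull_min hcontact hhalf hy
  simp only [mem_ofPred_eq, sub_apply] at this
  linarith

theorem mem_convexHull_contactSet (hS : IsCompact S) (hU : LowerSemicontinuousOn U S)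
    (hg : ∀ z ∈ S, g z + b ≤ U z) (hx : x ∈ S) (hgx : convexEnvelope S U x ≤ g x + b) :
    x ∈ convexHull ℝ {z ∈ S | U z ≤ g z + b} := by
  by_contra hxZ
  have hZ : IsCompact {z ∈ S | U z ≤ g z + b} := by
    have hlsc : LowerSemicontinuousOn (fun z => U z + -(g z + b)) S :=
      hU.add ((g.continuous.add continuous_const).neg.lowerSemicontinuous.lowerSemicontinuousOn _)
    convert hlsc.isCompact_inter_preimage_Iic hS 0 using 1
    ext z
    simp only [mem_inter_iff, mem_preimage, mem_Iic, ← sub_eq_add_neg, sub_nonpos, mem_ofPred_eq]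
  obtain ⟨ℓ, u, hℓZ, hℓx⟩ := geometric_hahn_banach_closed_point (convex_convexHull ℝ _)
    hZ.isCompact_convexHull.isClosed hxZ
  obtain ⟨δ, hδ, hδU⟩ := hS.exists_pos_add_mul_le (φ := fun z => g z + b) (h := fun z => ℓ z - u)
    hU (by fun_prop) (by fun_prop) hg
    fun z hz hUz => sub_neg.2 (hℓZ z (subset_convexHull ℝ _ ⟨hz, hUz⟩))
  have hpushed := le_convexEnvelope (U := U) (g := g + δ • ℓ) (b := b - δ * u)
    (fun z hz => by simp only [add_apply, smul_apply, smul_eq_mul]; linarith [hδU z hz]) hx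
  simp only [add_apply, smul_apply, smul_eq_mul] at hpushed
  nlinarith [mul_pos hδ (sub_pos.2 hℓx)]

end ConvexEnvelope

theorem quadForm_smul {n : ℕ} (A : Matrix (Fin n) (Fin n) ℝ) (t : ℝ)
    (v : EuclideanSpace ℝ (Fin n)) : quadForm A (t • v) = t ^ 2 * quadForm A v := by
  simp only [quadForm, PiLp.smul_apply, smul_eq_mul, Finset.mul_sum]
  exact Finset.sum_congr rfl fun i _ => Finset.sum_congr rfl fun j _ => by ring

section Subjet

variable {n : ℕ} {K : Set (EuclideanSpace ℝ (Fin n))} {u : EuclideanSpace ℝ (Fin n) → ℝ}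
  {x p z : EuclideanSpace ℝ (Fin n)} {A : Matrix (Fin n) (Fin n) ℝ}

theorem MemSubjetWithin.eventually_le_segment (hA : MemSubjetWithin K u x p A)
    (hK : Convex ℝ K) (hx : x ∈ K) (hz : z ∈ K) :
    ∀ᶠ t in 𝓝[>] (0 : ℝ), u x + t * inner ℝ p (z - x) +
      t ^ 2 * ((1 / 2) * quadForm A (z - x) - ‖z - x‖ ^ 2) ≤ u (x + t • (z - x)) := by
  have hseg : Tendsto (fun t : ℝ => x + t • (z - x)) (𝓝[>] 0) (𝓝[K] x) := by
    refine tendsto_nhdsWithin_of_tendsto_nhds_of_eventually_within _ ?_ ?_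
    · have hcont : Continuous fun t : ℝ => x + t • (z - x) := by fun_prop
      simpa using (hcont.tendsto 0).mono_left nhdsWithin_le_nhds
    · filter_upwards [Ioo_mem_nhdsGT one_pos] with t ht
      exact hK.add_smul_sub_mem hx hz ⟨ht.1.le, ht.2.le⟩
  filter_upwards [hseg.eventually (hA 1 one_pos), self_mem_nhdsWithin] with t ht (ht0 : 0 < t)
  simp only [add_sub_cancel_left, real_inner_smul_right, quadForm_smul, norm_smul,
    Real.norm_eq_abs, abs_of_pos ht0] at ht
  linear_combination ht

theorem MemSubjetWithin.add_inner_le_of_convexOn (hA : MemSubjetWithin K u x p A)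
    (hu : ConvexOn ℝ K u) (hx : x ∈ K) (hz : z ∈ K) : u x + inner ℝ p (z - x) ≤ u z :=
  hu.add_le_of_eventually_le hx hz (hA.eventually_le_segment hu.1 hx hz)

end Subjet

theorem convex_envelope_subjet_representation_general {n : ℕ}
    (Ω : Set (EuclideanSpace ℝ (Fin n))) (hΩconv : Convex ℝ Ω)
    (hΩbdd : Bornology.IsBounded Ω)
    (U : EuclideanSpace ℝ (Fin n) → ℝ) (hU : LowerSemicontinuousOn U (closure Ω))
    (x p : EuclideanSpace ℝ (Fin n)) (hx : x ∈ closure Ω)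
    (A : Matrix (Fin n) (Fin n) ℝ)
    (hA : MemSubjetWithin (closure Ω) (convexEnvelope (closure Ω) U) x p A) :
    ∃ (q : ℕ), 1 ≤ q ∧ q ≤ n + 1 ∧
      ∃ (xs : Fin q → EuclideanSpace ℝ (Fin n)) (lam : Fin q → ℝ),
        (∀ i, xs i ∈ closure Ω) ∧ (∀ i, lam i ∈ Set.Ioc (0:ℝ) 1) ∧
        (∑ i, lam i = 1) ∧ (x = ∑ i, lam i • xs i) ∧
        (convexEnvelope (closure Ω) U x = ∑ i, lam i * U (xs i)) ∧
        ∃ (g : EuclideanSpace ℝ (Fin n) →L[ℝ] ℝ) (b : ℝ),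
          ∀ y ∈ convexHull ℝ (Set.range xs), convexEnvelope (closure Ω) U y = g y + b := by
  set K := closure Ω
  set f := convexEnvelope K U
  have hKconv : Convex ℝ K := hΩconv.closure
  have hUbdd : BddBelow (U '' K) := hU.bddBelow_of_isCompact hΩbdd.isCompact_closure
  set g := innerSL ℝ p
  set b := f x - inner ℝ p x
  have hgb : ∀ y, g y + b = f x + inner ℝ p (y - x) := fun y => by
    simp only [g, b, innerSL_apply_apply, inner_sub_right]; ring
  have hg : ∀ z ∈ K, g z + b ≤ U z := fun z hz => (hgb z).trans_le <|
    (hA.add_inner_le_of_convexOn (convexOn_convexEnvelope hKconv hUbdd) hx hz).trans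
      (convexEnvelope_le hUbdd hz)
  have hfx : f x = g x + b := by rw [hgb, sub_self, inner_zero_right, add_zero]
  have hxZ := mem_convexHull_contactSet hΩbdd.isCompact_closure hU hg hx hfx.le
  obtain ⟨q, hq, xs, lam, hxsZ, hlam, hsum, hxs⟩ := eq_pos_convex_span_fin_of_mem_convexHull hxZ
  have hUxs : ∀ i, U (xs i) = g (xs i) + b := fun i => le_antisymm (hxsZ i).2 (hg _ (hxsZ i).1)
  refine ⟨q, Nat.one_le_iff_ne_zero.2 (by rintro rfl; simp at hsum), by simpa using hq, xs, lam,
    fun i => (hxsZ i).1, fun i => ⟨hlam i, ?_⟩, hsum, hxs.symm, ?_, g, b,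
    fun y hy => convexEnvelope_eq_of_mem_convexHull_contactSet hKconv hg
      (convexHull_mono (range_subset_iff.2 hxsZ) hy)⟩
  · exact hsum ▸ Finset.single_le_sum (fun j _ => (hlam j).le) (Finset.mem_univ i)
  · rw [hfx, ← hxs]
    simp only [hUxs, mul_add, Finset.sum_add_distrib, ← Finset.sum_mul, hsum, one_mul, map_sum,
      map_smul, smul_eq_mul]

theorem convex_envelope_subjet_representation {n : ℕ}
    (Ω : Set (EuclideanSpace ℝ (Fin n))) (hΩopen : IsOpen Ω) (hΩconv : Convex ℝ Ω)
    (hΩbdd : Bornology.IsBounded Ω)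
    (U : EuclideanSpace ℝ (Fin n) → ℝ) (hU : LowerSemicontinuousOn U (closure Ω))
    (x p : EuclideanSpace ℝ (Fin n)) (hx : x ∈ closure Ω)
    (A : Matrix (Fin n) (Fin n) ℝ)
    (hA : MemSubjetWithin (closure Ω) (convexEnvelope (closure Ω) U) x p A) :
    ∃ (q : ℕ), 1 ≤ q ∧ q ≤ n + 1 ∧
      ∃ (xs : Fin q → EuclideanSpace ℝ (Fin n)) (lam : Fin q → ℝ),
        (∀ i, xs i ∈ closure Ω) ∧ (∀ i, lam i ∈ Set.Ioc (0:ℝ) 1) ∧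
        (∑ i, lam i = 1) ∧ (x = ∑ i, lam i • xs i) ∧
        (convexEnvelope (closure Ω) U x = ∑ i, lam i * U (xs i)) ∧
        ∃ (g : EuclideanSpace ℝ (Fin n) →L[ℝ] ℝ) (b : ℝ),
          ∀ y ∈ convexHull ℝ (Set.range xs), convexEnvelope (closure Ω) U y = g y + b :=
  convex_envelope_subjet_representation_general Ω hΩconv hΩbdd U hU x p hx A hA
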